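/- The smallest complex subspace of N×N matrices that contains all the elements a_i^+ = e_{i0} and a_i^- = e_{0i} (i = 1,…,m+n) and is closed under the bracket ⟦·,·⟧ of homogeneous elements is exactly sl(m₁+1,m₂|n₁,n₂), the space of supertraceless matrices. In other words, the a_i^± generate sl(m₁+1,m₂|n₁,n₂). -/

import Mathlib

/-- Degrees in `ℤ₂ × ℤ₂`. -/
abbrev Deg := ZMod 2 × ZMod 2

/-- The dot product `a·b = a₁b₁ + a₂b₂ ∈ ℤ₂`. -/
def dot (a b : Deg) : ZMod 2 := a.1 * b.1 + a.2 * b.2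

/-- The sign `(−1)^{a·b}`. -/
noncomputable def sgn (a b : Deg) : ℂ := (-1 : ℂ) ^ (dot a b).val

/-- `(m+n+1) × (m+n+1)` complex matrices, `m = m₁+m₂`, `n = n₁+n₂`. -/
abbrev Mat (m₁ m₂ n₁ n₂ : ℕ) := Matrix (Fin (m₁+m₂+n₁+n₂+1)) (Fin (m₁+m₂+n₁+n₂+1)) ℂ

/-- The degree `d_i` of a row/column index. -/
def d {m₁ m₂ n₁ n₂ : ℕ} (i : Fin (m₁+m₂+n₁+n₂+1)) : Deg :=
  if i.val ≤ m₁ then (0, 0)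
  else if i.val ≤ m₁ + m₂ then (1, 1)
  else if i.val ≤ m₁ + m₂ + n₁ then (1, 0)
  else (0, 1)

/-- A matrix is homogeneous of degree `a` if `M i j = 0` whenever `d i + d j ≠ a`. -/
def IsHomog {m₁ m₂ n₁ n₂ : ℕ} (a : Deg) (M : Mat m₁ m₂ n₁ n₂) : Prop :=
  ∀ i j, d i + d j ≠ a → M i j = 0

/-- The bracket `⟦M,N⟧ = MN − (−1)^{a·b} NM` of homogeneous matrices of degrees `a`, `b`. -/
noncomputable def bb {m₁ m₂ n₁ n₂ : ℕ} (a b : Deg) (M N : Mat m₁ m₂ n₁ n₂) : Mat m₁ m₂ n₁ n₂ :=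
  M * N - sgn a b • (N * M)

/-- The graded supertrace. -/
noncomputable def Str {m₁ m₂ n₁ n₂ : ℕ} (M : Mat m₁ m₂ n₁ n₂) : ℂ :=
  ∑ i, if i.val ≤ m₁ + m₂ then M i i else - M i i

/-- The matrix unit `e_{ij}`. -/
noncomputable def e {m₁ m₂ n₁ n₂ : ℕ} (i j : Fin (m₁+m₂+n₁+n₂+1)) : Mat m₁ m₂ n₁ n₂ :=
  Matrix.single i j 1

/-
The supertrace is `M ↦ ∑ᵢ (−1)^{dᵢ·dᵢ} Mᵢᵢ`. For homogeneous `X`, `Y` of degrees `a`, `b`, only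
entries with `dᵢ + dⱼ = a = b` reach the diagonal of `XY` and `YX`, and there
`(−1)^{a·a} = (−1)^{dᵢ·dᵢ} (−1)^{dⱼ·dⱼ}` turns the weight of `i` into that of `j`; so brackets are
supertraceless. Conversely `⟦e_{i0}, e_{0j}⟧ = e_{ij} − δᵢⱼ (−1)^{dᵢ·dᵢ} e_{00}`, and these
elements span the supertraceless matrices because the `e_{00}`-corrections of `∑ Mᵢⱼ e_{ij}` add
up to `Str M · e_{00}`.
-/

lemma dot_add_self (a b : Deg) : dot (a + b) (a + b) = dot a a + dot b b := by
  revert a b; decide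

lemma sgn_add_self (a b : Deg) : sgn (a + b) (a + b) = sgn a a * sgn b b := by
  rw [sgn, sgn, sgn, dot_add_self, ZMod.val_add, ← neg_one_pow_eq_pow_mod_two, pow_add]

lemma sgn_mul_self (a b : Deg) : sgn a b * sgn a b = 1 := by
  rw [sgn, ← pow_add, ← two_mul, pow_mul, neg_one_sq, one_pow]

section
variable {m₁ m₂ n₁ n₂ : ℕ}

lemma d_zero : d (0 : Fin (m₁+m₂+n₁+n₂+1)) = 0 := by
  simp [d]

lemma sgn_d_self (i : Fin (m₁+m₂+n₁+n₂+1)) :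
    sgn (d i) (d i) = if i.val ≤ m₁ + m₂ then 1 else -1 := by
  unfold d
  split_ifs <;> first | omega | rfl | simp [sgn, dot, show ZMod.val (1 : ZMod 2) = 1 from rfl]

lemma Str_eq_sum (M : Mat m₁ m₂ n₁ n₂) : Str M = ∑ i, sgn (d i) (d i) * M i i := by
  refine Finset.sum_congr rfl fun i _ => ?_
  rw [sgn_d_self]
  split_ifs <;> ring

-- Its kernel is `sl(m₁+1,m₂|n₁,n₂)`.
noncomputable def supertrace : Mat m₁ m₂ n₁ n₂ →ₗ[ℂ] ℂ where
  toFun := Str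
  map_add' A B := by
    simp only [Str_eq_sum, Matrix.add_apply, mul_add, Finset.sum_add_distrib]
  map_smul' c A := by
    simp only [Str_eq_sum, Matrix.smul_apply, smul_eq_mul, RingHom.id_apply, Finset.mul_sum]
    exact Finset.sum_congr rfl fun i _ => by ring

lemma isHomog_e (i j : Fin (m₁+m₂+n₁+n₂+1)) : IsHomog (d i + d j) (e i j : Mat m₁ m₂ n₁ n₂) := by
  intro k l h
  simp only [e, Matrix.single_apply, ite_eq_right_iff, and_imp]
  rintro rfl rfl
  exact absurd rfl h

lemma Str_e_of_ne {i j : Fin (m₁+m₂+n₁+n₂+1)} (h : i ≠ j) : Str (e i j : Mat m₁ m₂ n₁ n₂) = 0 := by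
  rw [Str_eq_sum]
  refine Finset.sum_eq_zero fun k _ => ?_
  simp only [e, Matrix.single_apply, mul_ite, mul_one, mul_zero, ite_eq_right_iff, and_imp]
  rintro rfl rfl
  exact absurd rfl h

lemma Str_bb {a b : Deg} {X Y : Mat m₁ m₂ n₁ n₂} (hX : IsHomog a X) (hY : IsHomog b Y) :
    Str (bb a b X Y) = 0 := by
  change supertrace (X * Y - sgn a b • (Y * X)) = 0
  rw [map_sub, map_smul, sub_eq_zero]
  simp only [supertrace, LinearMap.coe_mk, AddHom.coe_mk, Str_eq_sum, Matrix.mul_apply,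
    Finset.mul_sum, smul_eq_mul]
  rw [Finset.sum_comm (f := fun i j => sgn a b * (sgn (d i) (d i) * (Y i j * X j i)))]
  refine Finset.sum_congr rfl fun i _ => Finset.sum_congr rfl fun j _ => ?_
  by_cases hXY : X i j = 0 ∨ Y j i = 0
  · rcases hXY with h | h <;> simp [h]
  push Not at hXY
  have ha : d i + d j = a := not_not.1 fun h => hXY.1 (hX i j h)
  have hb : d i + d j = b := not_not.1 fun h => hXY.2 (hY j i (by rwa [add_comm]))
  rw [← ha, ← hb, sgn_add_self]
  linear_combination (-(sgn (d i) (d i) * X i j * Y j i)) * sgn_mul_self (d j) (d j)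

lemma bb_e_e (i j : Fin (m₁+m₂+n₁+n₂+1)) :
    bb (d i) (d j) (e i 0) (e 0 j) =
      (e i j - if i = j then sgn (d i) (d i) • e 0 0 else 0 : Mat m₁ m₂ n₁ n₂) := by
  simp only [bb, e, Matrix.single_mul_single_same, mul_one]
  split_ifs with h
  · rw [h, Matrix.single_mul_single_same, mul_one]
  · rw [Matrix.single_mul_single_of_ne (c := (1 : ℂ)) _ _ _ (Ne.symm h) 1, smul_zero, sub_zero]

lemma eq_sum_of_Str_eq_zero {M : Mat m₁ m₂ n₁ n₂} (hM : Str M = 0) :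
    M = ∑ i, ∑ j, M i j • (e i j - if i = j then sgn (d i) (d i) • e 0 0 else 0) := by
  have hcorr : ∑ i, ∑ j, M i j • (if i = j then sgn (d i) (d i) • e 0 0 else 0) =
      Str M • (e 0 0 : Mat m₁ m₂ n₁ n₂) := by
    simp only [smul_ite, smul_zero, Finset.sum_ite_eq, Finset.mem_univ, if_true, smul_smul,
      ← Finset.sum_smul, Str_eq_sum, mul_comm]
  rw [hM, zero_smul] at hcorr
  simp only [smul_sub, Finset.sum_sub_distrib, hcorr, sub_zero]
  simp only [e, Matrix.smul_single, smul_eq_mul, mul_one]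
  exact M.matrix_eq_sum_single

lemma ker_supertrace_le {V : Submodule ℂ (Mat m₁ m₂ n₁ n₂)}
    (hgen : ∀ i : Fin (m₁+m₂+n₁+n₂+1), i ≠ 0 → e i 0 ∈ V ∧ e 0 i ∈ V)
    (hbr : ∀ (a b : Deg) (X Y : Mat m₁ m₂ n₁ n₂),
      X ∈ V → Y ∈ V → IsHomog a X → IsHomog b Y → bb a b X Y ∈ V) :
    LinearMap.ker supertrace ≤ V := by
  intro M hM
  have hbasis (i j : Fin (m₁+m₂+n₁+n₂+1)) :
      (e i j - if i = j then sgn (d i) (d i) • e 0 0 else 0 : Mat m₁ m₂ n₁ n₂) ∈ V := by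
    rcases eq_or_ne i 0 with rfl | hi
    · rcases eq_or_ne j 0 with rfl | hj
      · simp [d_zero, sgn, dot]
      · simpa [Ne.symm hj] using (hgen j hj).2
    rcases eq_or_ne j 0 with rfl | hj
    · simpa [hi] using (hgen i hi).1
    rw [← bb_e_e]
    exact hbr _ _ _ _ (hgen i hi).1 (hgen j hj).2
      (by simpa [d_zero] using isHomog_e i 0) (by simpa [d_zero] using isHomog_e 0 j)
  rw [eq_sum_of_Str_eq_zero hM]
  exact V.sum_mem fun i _ => V.sum_mem fun j _ => V.smul_mem _ (hbasis i j)

end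

theorem generators_generate_sl (m₁ m₂ n₁ n₂ : ℕ) :
    ((sInf {V : Submodule ℂ (Mat m₁ m₂ n₁ n₂) |
        (∀ i : Fin (m₁+m₂+n₁+n₂+1), i ≠ 0 → e i 0 ∈ V ∧ e 0 i ∈ V) ∧
        (∀ (a b : Deg) (X Y : Mat m₁ m₂ n₁ n₂),
          X ∈ V → Y ∈ V → IsHomog a X → IsHomog b Y → bb a b X Y ∈ V)} :
      Submodule ℂ (Mat m₁ m₂ n₁ n₂)) : Set (Mat m₁ m₂ n₁ n₂)) =
      {M : Mat m₁ m₂ n₁ n₂ | Str M = 0} := by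
  change _ = SetLike.coe (LinearMap.ker (supertrace : Mat m₁ m₂ n₁ n₂ →ₗ[ℂ] ℂ))
  congr 1
  exact le_antisymm
    (sInf_le ⟨fun i hi => ⟨Str_e_of_ne hi, Str_e_of_ne hi.symm⟩,
      fun _ _ _ _ _ _ hX hY => Str_bb hX hY⟩)
    (le_sInf fun V hV => ker_supertrace_le hV.1 hV.2)
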